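/- One-step error bound for the δ-cutoff scheme (used in the proof of Theorem 2.2). Let m be a positive integer, let B₀, B₁ be m×m real matrices with B₁ invertible, let δ ≥ 0, and let K, K₁, Δt > 0 satisfy ‖B₁⁻¹‖ ≤ K₁ and ‖B₁⁻¹ B₀‖ ≤ 1 + K Δt, where ‖·‖ is the operator norm on matrices induced by the supremum norm on ℝ^m. Let U, U', u, u', F ∈ ℝ^m with u componentwise nonnegative, suppose B₁ U' = B₀ U_δ⁺ + F (where U_δ⁺ is the componentwise δ-cutoff of U), and set τ = B₁ u' − B₀ u − F. Then ‖U' − u'‖∞ ≤ (1 + K Δt)(‖U − u‖∞ + δ) + K₁ ‖τ‖∞. -/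

import Mathlib

/-! Subtracting the exact step from the scheme gives the error equation
`U' - u' = B₁⁻¹B₀ (U_δ⁺ - u) - B₁⁻¹τ`, and since `u ≥ 0` the cutoff changes each
component of `U - u` by at most `δ`. -/

open Matrix

attribute [local instance] Matrix.linftyOpNormedAddCommGroup Matrix.linftyOpNormedRing

def deltaCutoff {ι α : Type*} [LinearOrder α] (δ : α) (U : ι → α) : ι → α :=
  fun i => max (U i) δ

theorem abs_max_sub_le_abs_sub_add {α : Type*} [AddCommGroup α] [LinearOrder α]
    [IsOrderedAddMonoid α] {a b δ : α} (hb : 0 ≤ b) (hδ : 0 ≤ δ) :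
    |max a δ - b| ≤ |a - b| + δ := by
  have hcut : |max b δ - b| ≤ δ := by
    rw [abs_of_nonneg (sub_nonneg.2 (le_max_left b δ)), sub_le_iff_le_add, max_le_iff]
    exact ⟨le_add_of_nonneg_left hδ, le_add_of_nonneg_right hb⟩
  calc |max a δ - b| ≤ |max a δ - max b δ| + |max b δ - b| := abs_sub_le _ _ _
    _ ≤ |a - b| + δ := add_le_add (abs_max_sub_max_le_abs a b δ) hcut

theorem norm_deltaCutoff_sub_le {ι : Type*} [Fintype ι] {δ : ℝ} {U u : ι → ℝ}
    (hu : ∀ i, 0 ≤ u i) (hδ : 0 ≤ δ) :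
    ‖deltaCutoff δ U - u‖ ≤ ‖U - u‖ + δ := by
  refine (pi_norm_le_iff_of_nonneg (by positivity)).2 fun i => ?_
  calc |max (U i) δ - u i| ≤ |U i - u i| + δ := abs_max_sub_le_abs_sub_add (hu i) hδ
    _ ≤ ‖U - u‖ + δ := by gcongr; exact norm_le_pi_norm (U - u) i

theorem sub_eq_inv_mul_mulVec_sub_sub {n R : Type*} [Fintype n] [DecidableEq n] [CommRing R]
    {B₀ B₁ : Matrix n n R} (hB₁ : IsUnit B₁) {U' V u u' F τ : n → R}
    (hstep : B₁ *ᵥ U' = B₀ *ᵥ V + F) (hτ : τ = B₁ *ᵥ u' - B₀ *ᵥ u - F) :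
    U' - u' = (B₁⁻¹ * B₀) *ᵥ (V - u) - B₁⁻¹ *ᵥ τ := by
  have : Invertible B₁ := hB₁.invertible
  rw [← mulVec_mulVec, ← mulVec_sub]
  refine (inv_mulVec_eq_vec ?_).symm
  rw [mulVec_sub, mulVec_sub, hstep, hτ]
  abel

theorem delta_cutoff_one_step_error_general (m : ℕ)
    (B₀ B₁ : Matrix (Fin m) (Fin m) ℝ) (hB₁ : IsUnit B₁)
    (δ : ℝ) (hδ : 0 ≤ δ)
    (K K₁ Δt : ℝ)
    (hinv : ‖B₁⁻¹‖ ≤ K₁) (hstab : ‖B₁⁻¹ * B₀‖ ≤ 1 + K * Δt)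
    (U U' u u' F : Fin m → ℝ) (hu : ∀ i, 0 ≤ u i)
    (hstep : B₁.mulVec U' = B₀.mulVec (fun i => max (U i) δ) + F)
    (τ : Fin m → ℝ) (hτ : τ = B₁.mulVec u' - B₀.mulVec u - F) :
    ‖U' - u'‖ ≤ (1 + K * Δt) * (‖U - u‖ + δ) + K₁ * ‖τ‖ := by
  rw [sub_eq_inv_mul_mulVec_sub_sub (V := deltaCutoff δ U) hB₁ hstep hτ]
  calc _ ≤ ‖B₁⁻¹ * B₀‖ * ‖deltaCutoff δ U - u‖ + ‖B₁⁻¹‖ * ‖τ‖ :=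
        (norm_sub_le _ _).trans (add_le_add (linfty_opNorm_mulVec _ _) (linfty_opNorm_mulVec _ _))
    _ ≤ (1 + K * Δt) * (‖U - u‖ + δ) + K₁ * ‖τ‖ := by
        gcongr
        · exact (norm_nonneg _).trans hstab
        · exact norm_deltaCutoff_sub_le hu hδ

/-- One-step error bound for the δ-cutoff scheme (used in the proof of Theorem 2.2):
if `‖B₁⁻¹‖ ≤ K₁`, `‖B₁⁻¹ B₀‖ ≤ 1 + K Δt`, `u` is componentwise nonnegative,
`B₁ U' = B₀ U_δ⁺ + F` (where `U_δ⁺` is the componentwise δ-cutoff of `U`),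
and `τ = B₁ u' - B₀ u - F`, then
`‖U' - u'‖∞ ≤ (1 + K Δt)(‖U - u‖∞ + δ) + K₁ ‖τ‖∞`. -/
theorem delta_cutoff_one_step_error (m : ℕ) (hm : 0 < m)
    (B₀ B₁ : Matrix (Fin m) (Fin m) ℝ) (hB₁ : IsUnit B₁)
    (δ : ℝ) (hδ : 0 ≤ δ)
    (K K₁ Δt : ℝ) (hK : 0 < K) (hK₁ : 0 < K₁) (hΔt : 0 < Δt)
    (hinv : ‖B₁⁻¹‖ ≤ K₁) (hstab : ‖B₁⁻¹ * B₀‖ ≤ 1 + K * Δt)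
    (U U' u u' F : Fin m → ℝ) (hu : ∀ i, 0 ≤ u i)
    (hstep : B₁.mulVec U' = B₀.mulVec (fun i => max (U i) δ) + F)
    (τ : Fin m → ℝ) (hτ : τ = B₁.mulVec u' - B₀.mulVec u - F) :
    ‖U' - u'‖ ≤ (1 + K * Δt) * (‖U - u‖ + δ) + K₁ * ‖τ‖ :=
  delta_cutoff_one_step_error_general m B₀ B₁ hB₁ δ hδ K K₁ Δt hinv hstab U U' u u' F hu hstep τ hτ
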